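/- Let N, k ∈ ℕ with N ≥ 2, let Ω ⊆ ℝᴺ be open, let c₁,…,c_k ∈ ℝ, and let f₁,…,f_k : ℝᴺ → ℝ be C¹ on Ω. Fix x₀ ∈ Ω and define, for 0 < r < dist(x₀, ∂Ω), H(r) := r^{1−N} ∫_{∂B_r(x₀)} ∑_{i=1}^k c_i f_i² dσ. Then H is differentiable on (0, dist(x₀,∂Ω)) with H'(r) = (2 / r^{N−1}) ∫_{∂B_r(x₀)} ∑_{i=1}^k c_i f_i ∂_n f_i dσ. -/

import Mathlib

/-!
Substituting `x = x₀ + ρ ω` and using that `μH[N-1]` scales by `ρ ^ (N-1)` under dilation,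
`H(ρ) = ∫_{S^{N-1}} ∑ cᵢ fᵢ(x₀ + ρ ω)² dσ(ω)`. The integrand is `C¹` in `ρ` with derivative
`∑ 2 cᵢ fᵢ(x₀ + ρ ω) Dfᵢ(x₀ + ρ ω) ω`, which is bounded on a compact neighbourhood, so one may
differentiate under the integral sign and scale back. Dominated convergence needs `μH[N-1]` of the unit sphere to be
finite: the sphere is covered by the radial projections of the `2N` faces of the cube `[-1, 1]ᴺ`,
which are Lipschitz images of a bounded subset of `ℝᴺ⁻¹`.
-/

open MeasureTheory Metric
open scoped RealInnerProductSpace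

noncomputable def radDeriv {N : ℕ} (x₀ : EuclideanSpace ℝ (Fin N)) (r : ℝ)
    (f : EuclideanSpace ℝ (Fin N) → ℝ) (x : EuclideanSpace ℝ (Fin N)) : ℝ :=
  ⟪gradient f x, x - x₀⟫ / r

lemma lipschitzOnWith_normalize {V : Type*} [NormedAddCommGroup V] [NormedSpace ℝ V] :
    LipschitzOnWith 2 (NormedSpace.normalize : V → V) {x | 1 ≤ ‖x‖} := by
  refine LipschitzOnWith.of_dist_le_mul fun x (hx : 1 ≤ ‖x‖) y (hy : 1 ≤ ‖y‖) => ?_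
  have hx0 : 0 < ‖x‖ := one_pos.trans_le hx
  have hy0 : 0 < ‖y‖ := one_pos.trans_le hy
  have hsplit : NormedSpace.normalize x - NormedSpace.normalize y
      = ‖x‖⁻¹ • (x - y) + (‖x‖⁻¹ - ‖y‖⁻¹) • y := by
    simp only [NormedSpace.normalize, smul_sub, sub_smul]; abel
  have h₁ : ‖‖x‖⁻¹ • (x - y)‖ ≤ ‖x - y‖ := by
    rw [norm_smul, norm_inv, norm_norm]
    exact mul_le_of_le_one_left (norm_nonneg _) (inv_le_one_of_one_le₀ hx)
  have h₂ : ‖(‖x‖⁻¹ - ‖y‖⁻¹) • y‖ ≤ ‖x - y‖ := by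
    have : ‖(‖x‖⁻¹ - ‖y‖⁻¹) • y‖ = |‖y‖ - ‖x‖| / ‖x‖ := by
      rw [norm_smul, Real.norm_eq_abs, inv_sub_inv hx0.ne' hy0.ne', abs_div,
        abs_of_pos (mul_pos hx0 hy0)]
      field_simp
    rw [this, norm_sub_rev]
    exact div_le_of_le_mul₀ hx0.le (norm_nonneg _)
      ((abs_norm_sub_norm_le y x).trans (le_mul_of_one_le_right (norm_nonneg _) hx))
  rw [dist_eq_norm, dist_eq_norm, hsplit, NNReal.coe_ofNat]
  linarith [norm_add_le (‖x‖⁻¹ • (x - y)) ((‖x‖⁻¹ - ‖y‖⁻¹) • y)]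

noncomputable def sphereChart {m : ℕ} (j : Fin (m + 1)) (s : ℝ) (y : Fin m → ℝ) :
    EuclideanSpace ℝ (Fin (m + 1)) :=
  NormedSpace.normalize (WithLp.toLp 2 (Fin.insertNth (α := fun _ => ℝ) j s y))

lemma hausdorffMeasure_image_sphereChart_lt_top {m : ℕ} (j : Fin (m + 1)) {s : ℝ}
    (hs : 1 ≤ |s|) {t : Set (Fin m → ℝ)} (ht : Bornology.IsBounded t) :
    μH[m] (sphereChart j s '' t) < ⊤ := by
  have hinsert : LipschitzWith 1 fun y : Fin m → ℝ => Fin.insertNth (α := fun _ => ℝ) j s y :=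
    LipschitzWith.of_dist_le_mul fun y z => by simp [Fin.dist_insertNth_insertNth]
  have hmaps : Set.MapsTo (fun y => WithLp.toLp 2 (Fin.insertNth (α := fun _ => ℝ) j s y))
      Set.univ {x : EuclideanSpace ℝ (Fin (m + 1)) | 1 ≤ ‖x‖} := fun y _ =>
    calc 1 ≤ ‖s‖ := hs
      _ ≤ _ := by
        simpa using PiLp.norm_apply_le (WithLp.toLp 2 (Fin.insertNth (α := fun _ => ℝ) j s y)) j
  have hlip := lipschitzOnWith_normalize.comp
    ((PiLp.lipschitzWith_toLp 2 _).comp hinsert).lipschitzOnWith hmaps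
  have hvol : μH[(m : ℝ)] t < ⊤ := by
    have h := hausdorffMeasure_pi_real (ι := Fin m)
    rw [Fintype.card_fin] at h
    exact h ▸ ht.measure_lt_top
  exact ((hlip.mono (Set.subset_univ t)).hausdorffMeasure_image_le (Nat.cast_nonneg m)).trans_lt
    (ENNReal.mul_lt_top (ENNReal.rpow_lt_top_of_nonneg (Nat.cast_nonneg m) ENNReal.coe_ne_top)
      hvol)

lemma sphere_subset_iUnion_image_sphereChart (m : ℕ) :
    sphere (0 : EuclideanSpace ℝ (Fin (m + 1))) 1 ⊆
      ⋃ j, ⋃ s ∈ ({-1, 1} : Set ℝ), sphereChart j s '' Set.Icc (-1) 1 := by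
  intro x hx
  rw [mem_sphere_zero_iff_norm] at hx
  obtain ⟨j, hj⟩ := Finite.exists_max fun i => |x i|
  obtain ⟨i₀, hi₀⟩ : ∃ i, x i ≠ 0 := by
    by_contra! h
    have : x = 0 := by ext i; exact h i
    simp [this] at hx
  set a := |x j|
  have ha : 0 < a := (abs_pos.mpr hi₀).trans_le (hj i₀)
  have hscaled : WithLp.toLp 2 (Fin.insertNth (α := fun _ => ℝ) j (a⁻¹ * x j)
      (fun i => a⁻¹ * x (j.succAbove i))) = a⁻¹ • x :=
    congrArg (WithLp.toLp 2) (Fin.insertNth_self_removeNth j (a⁻¹ • WithLp.ofLp x))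
  have hcoord : ∀ i, |a⁻¹ * x i| ≤ 1 := fun i => by
    rw [abs_mul, abs_inv, abs_of_pos ha]
    exact inv_mul_le_one_of_le₀ (hj i) ha.le
  have hsign : |a⁻¹ * x j| = 1 := by
    rw [abs_mul, abs_inv, abs_of_pos ha, inv_mul_cancel₀ ha.ne']
  simp only [Set.mem_iUnion]
  refine ⟨j, a⁻¹ * x j, ((abs_eq zero_le_one).mp hsign).symm,
    fun i => a⁻¹ * x (j.succAbove i), ⟨fun i => ?_, fun i => ?_⟩, ?_⟩
  · exact (abs_le.mp (hcoord _)).1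
  · exact (abs_le.mp (hcoord _)).2
  · rw [sphereChart, hscaled, NormedSpace.normalize_smul_of_pos (inv_pos.mpr ha),
      NormedSpace.normalize_eq_self_of_norm_eq_one hx]

lemma hausdorffMeasure_sphere_lt_top {N : ℕ} (hN : 1 ≤ N) :
    μH[(N : ℝ) - 1] (sphere (0 : EuclideanSpace ℝ (Fin N)) 1) < ⊤ := by
  obtain ⟨m, rfl⟩ := Nat.exists_eq_add_of_le' hN
  rw [Nat.cast_add_one, add_sub_cancel_right]
  refine (measure_mono (sphere_subset_iUnion_image_sphereChart m)).trans_lt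
    ((measure_iUnion_fintype_le _ _).trans_lt (ENNReal.sum_lt_top.mpr fun j _ => ?_))
  refine measure_biUnion_lt_top (Set.toFinite _) fun s hs => ?_
  refine hausdorffMeasure_image_sphereChart_lt_top j ?_ (Metric.isBounded_Icc _ _)
  rcases hs with rfl | rfl <;> simp

section Scaling

variable {E G : Type*} [NormedAddCommGroup E] [NormedSpace ℝ E] [MeasurableSpace E]
  [BorelSpace E] [NormedAddCommGroup G] [NormedSpace ℝ G] {d : ℝ}

lemma map_add_smul_hausdorffMeasure (hd : 0 ≤ d) (x₀ : E) {ρ : ℝ} (hρ : ρ ≠ 0) :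
    Measure.map (fun ω => x₀ + ρ • ω) μH[d] = ‖ρ‖₊⁻¹ ^ d • μH[d] := by
  have hcomp : (fun ω : E => x₀ + ρ • ω) = IsometryEquiv.addLeft x₀ ∘ AffineMap.homothety 0 ρ := by
    ext ω; simp [AffineMap.homothety_apply]
  rw [hcomp, ← Measure.map_map (IsometryEquiv.addLeft x₀).continuous.measurable
    (AffineMap.homothety_continuous _ _).measurable, map_homothety_hausdorffMeasure hd _ hρ,
    Measure.map_smul, IsometryEquiv.map_hausdorffMeasure]

lemma setIntegral_sphere_hausdorffMeasure (hd : 0 ≤ d) (x₀ : E) {ρ : ℝ} (hρ : 0 < ρ)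
    (g : E → G) :
    ∫ x in sphere x₀ ρ, g x ∂μH[d] = ρ ^ d • ∫ ω in sphere 0 1, g (x₀ + ρ • ω) ∂μH[d] := by
  have hT : MeasurableEmbedding (fun ω : E => x₀ + ρ • ω) :=
    ((Homeomorph.smulOfNeZero ρ hρ.ne').trans (Homeomorph.addLeft x₀)).measurableEmbedding
  have hpre : (fun ω : E => x₀ + ρ • ω) ⁻¹' sphere x₀ ρ = sphere 0 1 := by
    ext ω
    simp [norm_smul, abs_of_pos hρ, hρ.ne']
  have hconst : ρ ^ d * ((‖ρ‖₊⁻¹ ^ d : NNReal) : ℝ) = 1 := by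
    rw [NNReal.coe_rpow, NNReal.coe_inv, coe_nnnorm, Real.norm_of_nonneg hρ.le,
      Real.inv_rpow hρ.le, mul_inv_cancel₀ (Real.rpow_pos_of_pos hρ d).ne']
  rw [← hpre, ← hT.setIntegral_map, map_add_smul_hausdorffMeasure hd x₀ hρ.ne',
    Measure.restrict_smul, integral_smul_nnreal_measure, NNReal.smul_def, smul_smul, hconst,
    one_smul]

end Scaling

lemma hasDerivAt_setIntegral_of_continuousOn {X G : Type*} [TopologicalSpace X] [T2Space X]
    [MeasurableSpace X] [OpensMeasurableSpace X] [NormedAddCommGroup G] [NormedSpace ℝ G]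
    {μ : Measure X} {K : Set X} (hK : IsCompact K) (hμK : μ K ≠ ⊤) {F F' : ℝ → X → G}
    {r ε : ℝ} (hε : 0 < ε) (hF : ∀ ρ ∈ ball r ε, ContinuousOn (F ρ) K)
    (hF' : ContinuousOn (Function.uncurry F') (closedBall r ε ×ˢ K))
    (hderiv : ∀ ρ ∈ ball r ε, ∀ ω ∈ K, HasDerivAt (F · ω) (F' ρ ω) ρ) :
    HasDerivAt (fun ρ => ∫ ω in K, F ρ ω ∂μ) (∫ ω in K, F' r ω ∂μ) r := by
  have hKm : MeasurableSet K := hK.measurableSet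
  have hr : r ∈ ball r ε := mem_ball_self hε
  have : IsFiniteMeasure (μ.restrict K) :=
    ⟨by rwa [Measure.restrict_apply_univ, lt_top_iff_ne_top]⟩
  obtain ⟨C, hC⟩ := ((isCompact_closedBall r ε).prod hK).exists_bound_of_continuousOn hF'
  obtain ⟨B, hB⟩ := hK.exists_bound_of_continuousOn (hF r hr)
  have hF'r : ContinuousOn (F' r) K :=
    hF'.comp (continuous_const.prodMk continuous_id).continuousOn
      fun ω hω => ⟨mem_closedBall_self hε.le, hω⟩
  refine (hasDerivAt_integral_of_dominated_loc_of_deriv_le (bound := fun _ => C)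
    (ball_mem_nhds r hε) ?_ ?_ (hF'r.aestronglyMeasurable_of_isCompact hK hKm) ?_
    (integrable_const C) ?_).2
  · filter_upwards [ball_mem_nhds r hε] with ρ hρ
    exact (hF ρ hρ).aestronglyMeasurable_of_isCompact hK hKm
  · exact Integrable.of_bound ((hF r hr).aestronglyMeasurable_of_isCompact hK hKm) B
      ((ae_restrict_iff' hKm).mpr (Filter.Eventually.of_forall hB))
  · refine (ae_restrict_iff' hKm).mpr (Filter.Eventually.of_forall fun ω hω ρ hρ => ?_)
    exact hC (ρ, ω) ⟨ball_subset_closedBall hρ, hω⟩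
  · exact (ae_restrict_iff' hKm).mpr
      (Filter.Eventually.of_forall fun ω hω ρ hρ => hderiv ρ hρ ω hω)

section SphericalMean

variable {E G : Type*} [NormedAddCommGroup E] [NormedSpace ℝ E] [ProperSpace E]
  [MeasurableSpace E] [BorelSpace E] [NormedAddCommGroup G] [NormedSpace ℝ G]

lemma hasDerivAt_setIntegral_unitSphere_add_smul {μ : Measure E} (hμ : μ (sphere 0 1) ≠ ⊤)
    {g : E → G} {x₀ : E} {R r : ℝ} (hg : ContDiffOn ℝ 1 g (ball x₀ R)) (hr : |r| < R) :
    HasDerivAt (fun ρ => ∫ ω in sphere 0 1, g (x₀ + ρ • ω) ∂μ)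
      (∫ ω in sphere 0 1, fderiv ℝ g (x₀ + r • ω) ω ∂μ) r := by
  obtain ⟨ε, hε, hεR⟩ : ∃ ε > 0, |r| + ε < R := ⟨(R - |r|) / 2, by linarith, by linarith⟩
  have hmem : ∀ ρ ∈ closedBall r ε, ∀ ω ∈ sphere (0 : E) 1, x₀ + ρ • ω ∈ ball x₀ R := by
    intro ρ hρ ω hω
    rw [mem_closedBall, Real.dist_eq] at hρ
    rw [mem_sphere_zero_iff_norm] at hω
    rw [mem_ball, dist_self_add_left, norm_smul, hω, mul_one, Real.norm_eq_abs]
    linarith [abs_sub_abs_le_abs_sub ρ r]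
  have hline : Continuous fun p : ℝ × E => x₀ + p.1 • p.2 := by fun_prop
  refine hasDerivAt_setIntegral_of_continuousOn (F := fun ρ ω => g (x₀ + ρ • ω))
    (F' := fun ρ ω => fderiv ℝ g (x₀ + ρ • ω) ω) (isCompact_sphere 0 1) hμ hε
    (fun ρ hρ => hg.continuousOn.comp (hline.comp (Continuous.prodMk_right ρ)).continuousOn
      fun ω hω => hmem ρ (ball_subset_closedBall hρ) ω hω) ?_ ?_
  · exact ((hg.continuousOn_fderiv_of_isOpen isOpen_ball le_rfl).comp hline.continuousOn
      fun p hp => hmem p.1 hp.1 p.2 hp.2).clm_apply continuousOn_snd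
  · intro ρ hρ ω hω
    have hdiff : DifferentiableAt ℝ g (x₀ + ρ • ω) :=
      (hg.differentiableOn one_ne_zero).differentiableAt
        (isOpen_ball.mem_nhds (hmem ρ (ball_subset_closedBall hρ) ω hω))
    exact hdiff.hasFDerivAt.comp_hasDerivAt ρ
      (by simpa using ((hasDerivAt_id ρ).smul_const ω).const_add x₀)

lemma hasDerivAt_rpow_neg_smul_setIntegral_sphere {d : ℝ} (hd : 0 ≤ d)
    (hμ : μH[d] (sphere (0 : E) 1) ≠ ⊤) {g : E → G} {x₀ : E} {R r : ℝ}
    (hg : ContDiffOn ℝ 1 g (ball x₀ R)) (hr₀ : 0 < r) (hrR : r < R) :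
    HasDerivAt (fun ρ => ρ ^ (-d) • ∫ x in sphere x₀ ρ, g x ∂μH[d])
      (r ^ (-d) • ∫ x in sphere x₀ r, fderiv ℝ g x (r⁻¹ • (x - x₀)) ∂μH[d]) r := by
  have hcancel : ∀ {ρ : ℝ}, 0 < ρ → ρ ^ (-d) * ρ ^ d = 1 := fun hρ => by
    rw [← Real.rpow_add hρ, neg_add_cancel, Real.rpow_zero]
  have hmean : (fun ρ => ρ ^ (-d) • ∫ x in sphere x₀ ρ, g x ∂μH[d])
      =ᶠ[nhds r] fun ρ => ∫ ω in sphere 0 1, g (x₀ + ρ • ω) ∂μH[d] := by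
    filter_upwards [Ioi_mem_nhds hr₀] with ρ hρ
    rw [setIntegral_sphere_hausdorffMeasure hd x₀ hρ, smul_smul, hcancel hρ, one_smul]
  rw [setIntegral_sphere_hausdorffMeasure hd x₀ hr₀, smul_smul, hcancel hr₀, one_smul]
  simp only [add_sub_cancel_left, inv_smul_smul₀ hr₀.ne']
  exact (hasDerivAt_setIntegral_unitSphere_add_smul hμ hg
    ((abs_of_pos hr₀).trans_lt hrR)).congr_of_eventuallyEq hmean

end SphericalMean

lemma radDeriv_eq_fderiv {N : ℕ} (x₀ : EuclideanSpace ℝ (Fin N)) (r : ℝ)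
    (f : EuclideanSpace ℝ (Fin N) → ℝ) (x : EuclideanSpace ℝ (Fin N)) :
    radDeriv x₀ r f x = fderiv ℝ f x (r⁻¹ • (x - x₀)) := by
  rw [radDeriv, gradient, InnerProductSpace.toDual_symm_apply, map_smul, smul_eq_mul,
    div_eq_inv_mul]

lemma fderiv_sum_mul_sq_apply {E ι : Type*} [NormedAddCommGroup E] [NormedSpace ℝ E]
    [Fintype ι] (c : ι → ℝ) {f : ι → E → ℝ} {x : E} (hf : ∀ i, DifferentiableAt ℝ (f i) x)
    (v : E) :
    fderiv ℝ (fun y => ∑ i, c i * f i y ^ 2) x v = 2 * ∑ i, c i * f i x * fderiv ℝ (f i) x v := by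
  have h := HasFDerivAt.fun_sum (u := Finset.univ) fun i _ =>
    ((hf i).hasFDerivAt.pow 2).const_mul (c i)
  rw [h.fderiv, Finset.mul_sum]
  simp only [FunLike.coe_sum, Finset.sum_apply, smul_apply, smul_eq_mul, nsmul_eq_mul]
  exact Finset.sum_congr rfl fun i _ => by ring

theorem stmt5_general (N k : ℕ) (hN : 2 ≤ N) (Ω : Set (EuclideanSpace ℝ (Fin N)))
    (c : Fin k → ℝ) (f : Fin k → EuclideanSpace ℝ (Fin N) → ℝ)
    (hf : ∀ i, ContDiffOn ℝ 1 (f i) Ω)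
    (x₀ : EuclideanSpace ℝ (Fin N)) :
    ∀ r ∈ Set.Ioo 0 (Metric.infDist x₀ Ωᶜ),
      HasDerivAt (fun ρ : ℝ => ρ ^ ((1 : ℝ) - N) *
          ∫ x in Metric.sphere x₀ ρ, ∑ i, c i * (f i x) ^ 2 ∂μH[(N : ℝ) - 1])
        ((2 / r ^ (N - 1)) *
          ∫ x in Metric.sphere x₀ r, ∑ i, c i * f i x * radDeriv x₀ r (f i) x
            ∂μH[(N : ℝ) - 1]) r := by
  rintro r ⟨hr₀, hrR⟩
  have hd : (0 : ℝ) ≤ N - 1 := by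
    have : (2 : ℝ) ≤ N := by exact_mod_cast hN
    linarith
  have hball : ball x₀ (infDist x₀ Ωᶜ) ⊆ Ω := ball_infDist_compl_subset
  have hg : ContDiffOn ℝ 1 (fun x => ∑ i, c i * f i x ^ 2) (ball x₀ (infDist x₀ Ωᶜ)) :=
    ContDiffOn.sum fun i _ => contDiffOn_const.mul (((hf i).mono hball).pow 2)
  have hmean := hasDerivAt_rpow_neg_smul_setIntegral_sphere hd
    (hausdorffMeasure_sphere_lt_top (by omega)).ne hg hr₀ hrR
  have hpow : r ^ ((N : ℝ) - 1) = r ^ (N - 1) := by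
    rw [← Real.rpow_natCast, Nat.cast_sub (by omega), Nat.cast_one]
  have hintegrand : Set.EqOn
      (fun x => fderiv ℝ (fun y => ∑ i, c i * f i y ^ 2) x (r⁻¹ • (x - x₀)))
      (fun x => 2 * ∑ i, c i * f i x * radDeriv x₀ r (f i) x) (sphere x₀ r) := fun x hx => by
    have hxΩ : Ω ∈ nhds x :=
      Filter.mem_of_superset (isOpen_ball.mem_nhds (sphere_subset_ball hrR hx)) hball
    simp only [radDeriv_eq_fderiv, fderiv_sum_mul_sq_apply c fun i =>
      ((hf i).differentiableOn one_ne_zero).differentiableAt hxΩ]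
  simp only [smul_eq_mul] at hmean
  rw [show (1 : ℝ) - N = -((N : ℝ) - 1) by ring]
  refine hmean.congr_deriv ?_
  rw [setIntegral_congr_fun isClosed_sphere.measurableSet hintegrand, integral_const_mul,
    ← mul_assoc, Real.rpow_neg hr₀.le, hpow, inv_mul_eq_div]

/-- derivative of the averaged boundary quantity
`H(r) = r^{1−N} ∫_{∂B_r(x₀)} ∑ c_i f_i² dσ`:
for `0 < r < dist(x₀, ∂Ω)` it is differentiable with
`H'(r) = (2/r^{N−1}) ∫_{∂B_r(x₀)} ∑ c_i f_i ∂_n f_i dσ`. -/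
theorem stmt5 (N k : ℕ) (hN : 2 ≤ N) (Ω : Set (EuclideanSpace ℝ (Fin N))) (hΩ : IsOpen Ω)
    (c : Fin k → ℝ) (f : Fin k → EuclideanSpace ℝ (Fin N) → ℝ)
    (hf : ∀ i, ContDiffOn ℝ 1 (f i) Ω)
    (x₀ : EuclideanSpace ℝ (Fin N)) (hx₀ : x₀ ∈ Ω) :
    ∀ r ∈ Set.Ioo 0 (Metric.infDist x₀ Ωᶜ),
      HasDerivAt (fun ρ : ℝ => ρ ^ ((1 : ℝ) - N) *
          ∫ x in Metric.sphere x₀ ρ, ∑ i, c i * (f i x) ^ 2 ∂μH[(N : ℝ) - 1])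
        ((2 / r ^ (N - 1)) *
          ∫ x in Metric.sphere x₀ r, ∑ i, c i * f i x * radDeriv x₀ r (f i) x
            ∂μH[(N : ℝ) - 1]) r :=
  stmt5_general N k hN Ω c f hf x₀
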